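/- arXiv:math/0507298 — 3 statements merged into one kernel-verified Lean document; each statement's English description precedes it below -/
import Mathlib

section
/- Let z = x + iy ∈ ℂ. If |z − πn| ≥ π/4 for all integers n, then e^{|y|} < 4|sin z|. -/
/-!
Since `|sin z|² = sin² x + sinh² y`, we have `|sin z| ≥ sinh |y|`, and `4 sinh |y| > e^{|y|}` once
`|y| ≥ 1/2`. For `|y| < 1/2` it suffices that `|sin z| ≥ 1/2`: translating `z` by a multiple of `π`
(which only changes the sign of `sin z`) we may assume `|x| ≤ π/2`, and then Jordan's inequality
`|sin x| ≥ 2|x|/π` together with `|sinh y| ≥ |y|` gives `|sin z| ≥ 2|z|/π ≥ 1/2`.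
-/

namespace Complex

theorem norm_sin_sq (z : ℂ) : ‖sin z‖ ^ 2 = Real.sin z.re ^ 2 + Real.sinh z.im ^ 2 := by
  rw [sin_eq, ← ofReal_sin, ← ofReal_cos, ← ofReal_cosh, ← ofReal_sinh, ← ofReal_mul,
    ← ofReal_mul, ← normSq_eq_norm_sq, normSq_add_mul_I]
  nlinarith [Real.sin_sq_add_cos_sq z.re, Real.cosh_sq z.im]

theorem sinh_abs_im_le_norm_sin (z : ℂ) : Real.sinh |z.im| ≤ ‖sin z‖ := by
  have hsq : Real.sinh z.im ^ 2 ≤ ‖sin z‖ ^ 2 := by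
    rw [norm_sin_sq]; exact le_add_of_nonneg_left (sq_nonneg _)
  rw [← Real.abs_sinh, ← abs_norm (sin z)]
  exact sq_le_sq.1 hsq

theorem two_div_pi_mul_norm_le_norm_sin {z : ℂ} (hz : |z.re| ≤ Real.pi / 2) :
    2 / Real.pi * ‖z‖ ≤ ‖sin z‖ := by
  have hc : 2 / Real.pi ≤ 1 := (div_le_one Real.pi_pos).2 Real.two_le_pi
  have hre : (2 / Real.pi * |z.re|) ^ 2 ≤ Real.sin z.re ^ 2 := by
    rw [← sq_abs (Real.sin _)]
    exact pow_le_pow_left₀ (by positivity) (Real.mul_abs_le_abs_sin hz) 2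
  have him : (2 / Real.pi * |z.im|) ^ 2 ≤ Real.sinh z.im ^ 2 := by
    rw [← sq_abs (Real.sinh _), Real.abs_sinh]
    refine pow_le_pow_left₀ (by positivity) ?_ 2
    calc 2 / Real.pi * |z.im| ≤ |z.im| := mul_le_of_le_one_left (abs_nonneg _) hc
      _ ≤ Real.sinh |z.im| := Real.self_le_sinh_iff.2 (abs_nonneg _)
  refine (pow_le_pow_iff_left₀ (by positivity) (norm_nonneg _) two_ne_zero).1 ?_
  rw [norm_sin_sq, mul_pow, ← normSq_eq_norm_sq, normSq_apply]
  nlinarith [sq_abs z.re, sq_abs z.im]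

theorem exists_abs_re_sub_pi_mul_int_le (z : ℂ) :
    ∃ n : ℤ, |(z - Real.pi * n).re| ≤ Real.pi / 2 := by
  refine ⟨round (z.re / Real.pi), ?_⟩
  have hre : (z - Real.pi * round (z.re / Real.pi)).re
      = (z.re / Real.pi - round (z.re / Real.pi)) * Real.pi := by
    simp only [sub_re, mul_re, ofReal_re, intCast_re, ofReal_im, intCast_im, mul_zero, sub_zero]
    field_simp
  rw [hre, abs_mul, abs_of_pos Real.pi_pos]
  nlinarith [abs_sub_round (z.re / Real.pi), Real.pi_pos]

theorem two_div_pi_mul_le_norm_sin {z : ℂ} {r : ℝ} (h : ∀ n : ℤ, r ≤ ‖z - Real.pi * n‖) :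
    2 / Real.pi * r ≤ ‖sin z‖ := by
  obtain ⟨n, hn⟩ := exists_abs_re_sub_pi_mul_int_le z
  have hperiod : ‖sin (z - Real.pi * n)‖ = ‖sin z‖ := by
    rw [mul_comm, sin_antiperiodic.sub_int_mul_eq, norm_mul]
    simp only [Int.coe_negOnePow, norm_pow, norm_neg, norm_one, one_pow, one_mul]
  calc 2 / Real.pi * r ≤ 2 / Real.pi * ‖z - Real.pi * n‖ := by gcongr; exact h n
    _ ≤ ‖sin z‖ := hperiod ▸ two_div_pi_mul_norm_le_norm_sin hn

end Complex

theorem Real.exp_lt_four_mul_sinh {y : ℝ} (hy : 1 / 2 ≤ y) : Real.exp y < 4 * Real.sinh y := by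
  have h2 : 2 < Real.exp (2 * y) := by
    linarith [Real.add_one_lt_exp (show 2 * y ≠ 0 by positivity)]
  have hexp : Real.exp (2 * y) * Real.exp (-y) = Real.exp y := by rw [← Real.exp_add]; ring_nf
  rw [Real.sinh_eq]
  nlinarith [mul_lt_mul_of_pos_right h2 (Real.exp_pos (-y))]

/-- the standard estimate `e^{|Im z|} < 4|sin z|` away from the zeros of sine. -/
theorem stmt_9 (z : ℂ) (h : ∀ n : ℤ, Real.pi / 4 ≤ ‖z - Real.pi * n‖) :
    Real.exp |z.im| < 4 * ‖Complex.sin z‖ := by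
  have hsin : 1 / 2 ≤ ‖Complex.sin z‖ := by
    convert Complex.two_div_pi_mul_le_norm_sin h using 1
    field_simp
    norm_num
  rcases le_or_gt (1 / 2) |z.im| with hy | hy
  · calc Real.exp |z.im| < 4 * Real.sinh |z.im| := Real.exp_lt_four_mul_sinh hy
      _ ≤ 4 * ‖Complex.sin z‖ := by gcongr; exact Complex.sinh_abs_im_le_norm_sin z
  · calc Real.exp |z.im| < Real.exp (Real.log 2) := by
          gcongr; linarith [Real.log_two_gt_d9]
      _ = 2 := Real.exp_log two_pos
      _ ≤ 4 * ‖Complex.sin z‖ := by linarith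
end

section
/- For the operator L^γ = d⁴/dt⁴ + γ δ_per with δ_per the periodic delta potential, the trace function satisfies T₁^γ(λ) = T₁⁰(λ) − γ s₋(z)/(4z³), where z = λ^{1/4}, T₁⁰ = (cosh z + cos z)/2, and s₋(z) = (sinh z − sin z)/2. Equivalently, T₁^γ = c₊(z) − γ φ₃⁰(1,λ)/4 where c₊ = (cosh z + cos z)/2 and φ₃⁰(1,λ) = (sinh z − sin z)/(2z³). -/
/-!
The free fundamental solutions form a derivative chain `φ₃' = φ₂`, `φ₂' = φ₁`, `φ₁' = φ₀`, with
`φⱼ⁽ᵏ⁾(0) = δⱼₖ`. Hence `φⱼ⁽ʲ⁾ = φ₀`, and the `j`-th derivative of the jump correction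
`t ↦ φ₃(t - 1)` at `t = 1` is `φ₃₋ⱼ(0)`, which vanishes except for `j = 3`, where it is `1`.
So `4 T₁^γ = 4 φ₀(1) - γ φ₃(1)`.
-/

open Complex

lemma hasDerivAt_comp_const_mul_ofReal (z : ℂ) {F F' : ℂ → ℂ}
    (hF : ∀ w, HasDerivAt F (F' w) w) (t : ℝ) :
    HasDerivAt (fun s : ℝ => F (z * s)) (z * F' (z * t)) t := by
  have h := (hF (z * t)).comp (t : ℂ) ((hasDerivAt_id (t : ℂ)).const_mul z)
  simpa [mul_comm] using h.comp_ofReal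

namespace FreeFundamental

variable (z : ℂ)

noncomputable def φ₀ (t : ℝ) : ℂ := (cosh (z * t) + cos (z * t)) / 2

noncomputable def φ₁ (t : ℝ) : ℂ := (sinh (z * t) + sin (z * t)) / (2 * z)

noncomputable def φ₂ (t : ℝ) : ℂ := (cosh (z * t) - cos (z * t)) / (2 * z ^ 2)

noncomputable def φ₃ (t : ℝ) : ℂ := (sinh (z * t) - sin (z * t)) / (2 * z ^ 3)

variable {z}

lemma hasDerivAt_φ₁ (hz : z ≠ 0) (t : ℝ) : HasDerivAt (φ₁ z) (φ₀ z t) t := by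
  have h : HasDerivAt (φ₁ z) ((z * cosh (z * t) + z * cos (z * t)) / (2 * z)) t :=
    ((hasDerivAt_comp_const_mul_ofReal z hasDerivAt_sinh t).add
      (hasDerivAt_comp_const_mul_ofReal z hasDerivAt_sin t)).div_const (2 * z)
  exact h.congr_deriv (by unfold φ₀; field_simp)

lemma hasDerivAt_φ₂ (hz : z ≠ 0) (t : ℝ) : HasDerivAt (φ₂ z) (φ₁ z t) t := by
  have h : HasDerivAt (φ₂ z) ((z * sinh (z * t) - z * -sin (z * t)) / (2 * z ^ 2)) t :=
    ((hasDerivAt_comp_const_mul_ofReal z hasDerivAt_cosh t).sub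
      (hasDerivAt_comp_const_mul_ofReal z hasDerivAt_cos t)).div_const (2 * z ^ 2)
  exact h.congr_deriv (by unfold φ₁; field_simp; ring)

lemma hasDerivAt_φ₃ (hz : z ≠ 0) (t : ℝ) : HasDerivAt (φ₃ z) (φ₂ z t) t := by
  have h : HasDerivAt (φ₃ z) ((z * cosh (z * t) - z * cos (z * t)) / (2 * z ^ 3)) t :=
    ((hasDerivAt_comp_const_mul_ofReal z hasDerivAt_sinh t).sub
      (hasDerivAt_comp_const_mul_ofReal z hasDerivAt_sin t)).div_const (2 * z ^ 3)
  exact h.congr_deriv (by unfold φ₂; field_simp)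

@[simp] lemma φ₀_zero : φ₀ z 0 = 1 := by norm_num [φ₀]

@[simp] lemma φ₁_zero : φ₁ z 0 = 0 := by simp [φ₁]

@[simp] lemma φ₂_zero : φ₂ z 0 = 0 := by simp [φ₂]

@[simp] lemma φ₃_zero : φ₃ z 0 = 0 := by simp [φ₃]

end FreeFundamental

lemma deriv_sub_mul_comp_sub_one_mul {f f' g g' : ℝ → ℂ} (hf : ∀ t, HasDerivAt f (f' t) t)
    (hg : ∀ t, HasDerivAt g (g' t) t) (a c : ℂ) :
    deriv (fun t => f t - a * g (t - 1) * c) = fun t => f' t - a * g' (t - 1) * c := by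
  funext t
  have hshift : HasDerivAt (fun s => g (s - 1)) (g' (t - 1)) t := by
    simpa using (hg (t - 1)).comp_sub_const t 1
  exact ((hf t).sub ((hshift.const_mul a).mul_const c)).deriv

/-- for the periodic delta potential, the trace function satisfies
`T₁^γ = T₁⁰ − γ s₋(z)/(4z³) = c₊(z) − γ φ₃⁰(1,λ)/4`, where `T₁^γ` is computed from the
fundamental solutions `φⱼ(t) = φⱼ⁰(t) − γ φ₃⁰(t−1) φⱼ⁰(1)` on `[1,2)`. -/
theorem stmt_15 (z γ : ℂ) (hz : z ≠ 0)
    (φ0 φ1 φ2 φ3 : ℝ → ℂ)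
    (h0 : ∀ t : ℝ, φ0 t = (Complex.cosh (z * t) + Complex.cos (z * t)) / 2)
    (h1 : ∀ t : ℝ, φ1 t = (Complex.sinh (z * t) + Complex.sin (z * t)) / (2 * z))
    (h2 : ∀ t : ℝ, φ2 t = (Complex.cosh (z * t) - Complex.cos (z * t)) / (2 * z ^ 2))
    (h3 : ∀ t : ℝ, φ3 t = (Complex.sinh (z * t) - Complex.sin (z * t)) / (2 * z ^ 3))
    (T1γ : ℂ)
    (hT1γ : T1γ = (1 / 4) *
      (iteratedDeriv 0 (fun t : ℝ => φ0 t - γ * φ3 (t - 1) * φ0 1) 1 +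
       iteratedDeriv 1 (fun t : ℝ => φ1 t - γ * φ3 (t - 1) * φ1 1) 1 +
       iteratedDeriv 2 (fun t : ℝ => φ2 t - γ * φ3 (t - 1) * φ2 1) 1 +
       iteratedDeriv 3 (fun t : ℝ => φ3 t - γ * φ3 (t - 1) * φ3 1) 1)) :
    T1γ = (Complex.cosh z + Complex.cos z) / 2 -
        γ * ((Complex.sinh z - Complex.sin z) / 2) / (4 * z ^ 3) ∧
    T1γ = (Complex.cosh z + Complex.cos z) / 2 -
        γ * ((Complex.sinh z - Complex.sin z) / (2 * z ^ 3)) / 4 := by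
  open FreeFundamental in
  obtain rfl : φ0 = φ₀ z := funext h0
  obtain rfl : φ1 = φ₁ z := funext h1
  obtain rfl : φ2 = φ₂ z := funext h2
  obtain rfl : φ3 = φ₃ z := funext h3
  have d₁ := hasDerivAt_φ₁ hz
  have d₂ := hasDerivAt_φ₂ hz
  have d₃ := hasDerivAt_φ₃ hz
  simp only [iteratedDeriv_succ', iteratedDeriv_zero, deriv_sub_mul_comp_sub_one_mul d₁ d₃,
    deriv_sub_mul_comp_sub_one_mul d₂ d₃, deriv_sub_mul_comp_sub_one_mul d₁ d₂,
    deriv_sub_mul_comp_sub_one_mul d₃ d₃, deriv_sub_mul_comp_sub_one_mul d₂ d₂,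
    deriv_sub_mul_comp_sub_one_mul d₁ d₁, sub_self, φ₀_zero, φ₁_zero, φ₂_zero, φ₃_zero] at hT1γ
  have hT : T1γ = φ₀ z 1 - γ * φ₃ z 1 / 4 := by rw [hT1γ]; ring
  simp only [φ₀, φ₃, Complex.ofReal_one, mul_one] at hT
  exact ⟨by rw [hT]; ring, hT⟩
end

section
/- For the operator L^γ = d⁴/dt⁴ + γδ_per, the function ρ^γ(λ) = (T₂^γ + 1)/2 − (T₁^γ)² satisfies ρ^γ(λ) = ρ⁰(λ) − γ c₋(z)s₊(z)/(2z³) + γ² s₋(z)²/(16 z⁶), where z = λ^{1/4}, c₋ = (cosh z − cos z)/2, s₊ = (sinh z + sin z)/2, s₋ = (sinh z − sin z)/2, and ρ⁰ = c₋². -/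
/-- for the periodic delta potential,
`ρ^γ = (T₂^γ+1)/2 − (T₁^γ)² = ρ⁰ − γ c₋ s₊/(2z³) + γ² s₋²/(16z⁶)`. -/
theorem stmt_16 (z γ : ℂ) (hz : z ≠ 0)
    (cp cm sp sm : ℂ)
    (hcp : cp = (Complex.cosh z + Complex.cos z) / 2)
    (hcm : cm = (Complex.cosh z - Complex.cos z) / 2)
    (hsp : sp = (Complex.sinh z + Complex.sin z) / 2)
    (hsm : sm = (Complex.sinh z - Complex.sin z) / 2)
    (T1γ T2γ : ℂ)
    (hT1γ : T1γ = cp - γ * sm / (4 * z ^ 3))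
    (hT2γ : T2γ = (Complex.cos (2 * z) + Complex.cosh (2 * z)) / 2 -
        γ / 2 * ((Complex.sinh (2 * z) - Complex.sin (2 * z)) / (2 * z ^ 3)) +
        γ ^ 2 / 4 * ((Complex.sinh z - Complex.sin z) / (2 * z ^ 3)) ^ 2) :
    (T2γ + 1) / 2 - T1γ ^ 2 =
      cm ^ 2 - γ * cm * sp / (2 * z ^ 3) + γ ^ 2 * sm ^ 2 / (16 * z ^ 6) := by
  subst hcp hcm hsp hsm hT1γ hT2γ
  rw [Complex.cos_two_mul, Complex.cosh_two_mul, Complex.sin_two_mul,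
    Complex.sinh_two_mul]
  linear_combination (-1/4 : ℂ) * Complex.cosh_sq_sub_sinh_sq z
end
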